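/- arXiv:1708.01201 — 3 statements merged into one kernel-verified Lean document; each statement's English description precedes it below -/
import Mathlib

section
/- Let A be a finite-dimensional commutative associative unital algebra over ℝ, equipped with a complete algebra norm, which admits a multiplicative unital nil basis: a basis {1, ε_1, …, ε_{n−1}} in which every basis element other than 1 is nilpotent, and such that the product of any two basis elements is a real scalar multiple of a basis element. Then the exponential function exp : A → A is injective. -/
/-!
Every element of `A` is `a + u` with `a` real and `u` nilpotent (the basis vectors other than `1`
are nilpotent and nilpotents form an ideal). For nilpotent `u` the exponential series is a
polynomial, `exp u = 1 + u v` with `v` a unit, so `exp (a + u) = e^a (1 + u v)`. If this equals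
`1`, then `(1 - e^a) • 1 = e^a u v` is a nilpotent scalar, hence `e^a = 1`, and then `u v = 0`
forces `u = 0`. So the kernel of `exp` is trivial, and `exp` is a homomorphism `(A, +) → (A, ·)`.
-/

open NormedSpace

theorem NormedSpace.exists_isUnit_exp_eq_one_add_mul_of_isNilpotent {𝔸 : Type*} [Ring 𝔸]
    [Algebra ℚ 𝔸] [TopologicalSpace 𝔸] [IsTopologicalRing 𝔸] {u : 𝔸} (hu : IsNilpotent u) :
    ∃ v : 𝔸, IsUnit v ∧ exp u = 1 + u * v := by
  obtain ⟨m, hm⟩ := hu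
  set w : 𝔸 := ∑ k ∈ Finset.range m, ((k + 2).factorial⁻¹ : ℚ) • u ^ k
  have huw : Commute u w :=
    Commute.sum_right _ _ _ fun k _ ↦ ((Commute.refl u).pow_right k).smul_right _
  refine ⟨1 + u * w, (huw.isNilpotent_mul_right ⟨m, hm⟩).isUnit_one_add, ?_⟩
  have hexp : exp u = ∑ k ∈ Finset.range (m + 2), (k.factorial⁻¹ : ℚ) • u ^ k := by
    rw [exp_eq_tsum ℚ]
    exact tsum_eq_sum fun k hk ↦ by
      rw [pow_eq_zero_of_le (by simp at hk; omega) hm, smul_zero]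
  rw [hexp, Finset.sum_range_succ', Finset.sum_range_succ', mul_add, mul_one, Finset.mul_sum,
    Finset.mul_sum]
  simp only [pow_succ', mul_smul_comm, Nat.factorial, Nat.cast_one, inv_one, one_smul, pow_zero,
    mul_one]
  abel

theorem algebraMap_mul_one_add_eq_one_iff {K A : Type*} [Field K] [Ring A] [Nontrivial A]
    [Algebra K A] {c : K} {w : A} (hw : IsNilpotent w) :
    algebraMap K A c * (1 + w) = 1 ↔ c = 1 ∧ w = 0 := by
  refine ⟨fun h ↦ ?_, fun ⟨hc, hw⟩ ↦ by simp [hc, hw]⟩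
  have hscalar : algebraMap K A (1 - c) = algebraMap K A c * w := by
    rw [map_sub, map_one, ← h]
    noncomm_ring
  have hc : c = 1 := by
    have : IsNilpotent (algebraMap K A (1 - c)) :=
      hscalar ▸ (Algebra.commute_algebraMap_left c w).isNilpotent_mul_left hw
    exact (sub_eq_zero.mp ((IsNilpotent.map_iff (algebraMap K A).injective).mp this).eq_zero).symm
  subst hc
  simpa using h

theorem Module.Basis.exists_isNilpotent_sub_algebraMap {ι R A : Type*} [Fintype ι] [CommRing R]
    [CommRing A] [Algebra R A] (β : Module.Basis ι R A) {i₀ : ι} (hone : β i₀ = 1)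
    (hnil : ∀ i, i ≠ i₀ → IsNilpotent (β i)) (z : A) :
    ∃ a : R, IsNilpotent (z - algebraMap R A a) := by
  classical
  refine ⟨β.repr z i₀, ?_⟩
  have hsplit :
      z - algebraMap R A (β.repr z i₀) = ∑ i ∈ Finset.univ.erase i₀, β.repr z i • β i := by
    rw [Algebra.algebraMap_eq_smul_one, ← hone, sub_eq_iff_eq_add',
      Finset.add_sum_erase _ (fun i ↦ β.repr z i • β i) (Finset.mem_univ i₀), β.sum_repr]
  rw [hsplit]
  exact isNilpotent_sum fun i hi ↦ (hnil i (Finset.ne_of_mem_erase hi)).smul _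

theorem NormedSpace.exp_injective_of_forall_isNilpotent_sub_algebraMap {A : Type*}
    [NormedCommRing A] [NormedAlgebra ℝ A] [CompleteSpace A]
    (h : ∀ z : A, ∃ a : ℝ, IsNilpotent (z - algebraMap ℝ A a)) :
    Function.Injective (exp : A → A) := by
  nontriviality A
  -- `exp_add` is stated over `ℚ`; `exp` itself does not depend on the scalar field.
  let : NormedAlgebra ℚ A := .restrictScalars ℚ ℝ A
  suffices hker : ∀ z : A, exp z = 1 → z = 0 by
    intro x y hxy
    refine sub_eq_zero.mp (hker _ ?_)
    rw [sub_eq_add_neg, exp_add, hxy, ← exp_add, add_neg_cancel, exp_zero]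
  intro z hz
  obtain ⟨a, hu⟩ := h z
  obtain ⟨v, hv, hexp⟩ := exists_isUnit_exp_eq_one_add_mul_of_isNilpotent hu
  have hfactor : algebraMap ℝ A (Real.exp a) * (1 + (z - algebraMap ℝ A a) * v) = 1 := by
    rw [← hexp, Real.exp_eq_exp_ℝ, algebraMap_exp_comm, ← exp_add, add_sub_cancel, hz]
  obtain ⟨hea, huv⟩ :=
    (algebraMap_mul_one_add_eq_one_iff ((Commute.all _ _).isNilpotent_mul_right hu)).mp hfactor
  rw [hv.mul_left_eq_zero, sub_eq_zero] at huv
  rw [huv, Real.exp_eq_one_iff a |>.mp hea, map_zero]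

theorem stmt11_general (A : Type*) [NormedCommRing A] [NormedAlgebra ℝ A] [CompleteSpace A]
    (n : ℕ) (β : Module.Basis (Fin (n + 1)) ℝ A) (hone : β 0 = 1)
    (hnil : ∀ i : Fin (n + 1), i ≠ 0 → IsNilpotent (β i)) :
    Function.Injective (exp : A → A) :=
  exp_injective_of_forall_isNilpotent_sub_algebraMap <|
    β.exists_isNilpotent_sub_algebraMap hone hnil

/-- On a finite-dimensional commutative associative unital `ℝ`-algebra with a
complete algebra norm which admits a multiplicative unital nil basis (first basis element is
`1`, all other basis elements nilpotent, and products of basis elements are real scalar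
multiples of basis elements), the exponential function is injective. -/
theorem stmt11 (A : Type*) [NormedCommRing A] [NormedAlgebra ℝ A] [CompleteSpace A]
    [FiniteDimensional ℝ A]
    (n : ℕ) (β : Module.Basis (Fin (n + 1)) ℝ A) (hone : β 0 = 1)
    (hnil : ∀ i : Fin (n + 1), i ≠ 0 → IsNilpotent (β i))
    (hmul : ∀ i j, ∃ (c : ℝ) (k : Fin (n + 1)), β i * β j = c • β k) :
    Function.Injective (exp : A → A) :=
  stmt11_general A n β hone hnil
end

section
/- Let A be a finite-dimensional commutative associative unital algebra over ℝ, equipped with a complete algebra norm, which admits a multiplicative basis (the product of any two basis elements is a real scalar multiple of a basis element), and suppose that for every maximal ideal m of A the quotient A/m is one-dimensional as an ℝ-vector space (i.e., every residue field is ℝ, so A has no complex factor). Then the exponential function exp : A → A is injective; consequently A has a unique logarithm defined on all of Ld(A). -/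
/-!
Each residue field of `A` is `ℝ`, so each maximal ideal is the kernel of a character
`χ : A →ₐ[ℝ] ℝ`, which is continuous and hence satisfies `χ (exp z) = Real.exp (χ z)`.
Thus `exp z = 1` puts `z` in every maximal ideal, i.e. in every prime ideal of the Artinian ring
`A`, so `z` is nilpotent. For nilpotent `z` the identity `z ^ k * exp z = z ^ k + z ^ (k + 1)`,
valid once `z ^ (k + 2) = 0`, lowers the nilpotency order step by step until `z = 0`.
-/

open NormedSpace

theorem Ideal.exists_algHom_ker_eq_of_finrank_quotient_eq_one {K A : Type*} [Field K]
    [CommRing A] [Algebra K A] (m : Ideal A) (hm : Module.finrank K (A ⧸ m) = 1) :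
    ∃ χ : A →ₐ[K] K, RingHom.ker χ = m := by
  have : Nontrivial (A ⧸ m) := Module.nontrivial_of_finrank_eq_succ hm
  have hbij : Function.Bijective (Algebra.ofId K (A ⧸ m)) :=
    ⟨(algebraMap K (A ⧸ m)).injective, fun x =>
      Algebra.mem_bot.mp (Subalgebra.bot_eq_top_of_finrank_eq_one hm ▸ Algebra.mem_top)⟩
  refine ⟨(AlgEquiv.ofBijective _ hbij).symm.toAlgHom.comp (Ideal.Quotient.mkₐ K m), ?_⟩
  ext z
  simpa [RingHom.mem_ker] using Ideal.Quotient.eq_zero_iff_mem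

namespace NormedSpace

section NormedRing

variable {A : Type*} [NormedRing A] [NormedAlgebra ℝ A] [CompleteSpace A]

theorem pow_mul_exp_eq_of_pow_eq_zero {z : A} {k : ℕ} (hz : z ^ (k + 2) = 0) :
    z ^ k * exp z = z ^ k + z ^ (k + 1) := by
  have hsum := (exp_series_hasSum_exp' (𝕂 := ℝ) z).mul_left (z ^ k)
  have hvanish : ∀ j ∉ Finset.range 2, z ^ k * ((j.factorial⁻¹ : ℝ) • z ^ j) = 0 := by
    intro j hj
    rw [Finset.mem_range, not_lt] at hj
    rw [mul_smul_comm, ← pow_add, pow_eq_zero_of_le (by omega) hz, smul_zero]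
  refine hsum.unique ?_
  simpa [Finset.sum_range_succ, ← pow_succ] using hasSum_sum_of_ne_finset_zero hvanish

theorem eq_zero_of_isNilpotent_of_exp_eq_one {z : A} (hnil : IsNilpotent z)
    (hexp : exp z = 1) : z = 0 := by
  obtain ⟨N, hN⟩ := hnil
  suffices ∀ N, z ^ (N + 1) = 0 → z = 0 from this N (pow_eq_zero_of_le N.le_succ hN)
  intro N hN
  induction N with
  | zero => simpa using hN
  | succ k ih =>
    have := pow_mul_exp_eq_of_pow_eq_zero hN
    rw [hexp, mul_one, left_eq_add] at this
    exact ih this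

end NormedRing

section FiniteDimensional

variable {A : Type*} [NormedCommRing A] [NormedAlgebra ℝ A] [CompleteSpace A]
  [FiniteDimensional ℝ A]

theorem isNilpotent_of_exp_eq_one
    (hres : ∀ m : Ideal A, m.IsMaximal → Module.finrank ℝ (A ⧸ m) = 1)
    {z : A} (hexp : exp z = 1) : IsNilpotent z := by
  have : IsArtinianRing A := IsArtinianRing.of_finite ℝ A
  let _ : NormedAlgebra ℚ A := NormedAlgebra.restrictScalars ℚ ℝ A
  rw [nilpotent_iff_mem_prime]
  intro J hJ
  obtain ⟨χ, hχ⟩ := J.exists_algHom_ker_eq_of_finrank_quotient_eq_one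
    (hres J (IsArtinianRing.isMaximal_of_isPrime J))
  have hχexp : Real.exp (χ z) = 1 := by
    rw [Real.exp_eq_exp_ℝ, ← map_exp χ χ.toLinearMap.continuous_of_finiteDimensional, hexp,
      map_one]
  rw [← hχ, RingHom.mem_ker]
  exact Real.exp_eq_one_iff _ |>.mp hχexp

theorem exp_injective_of_finrank_quotient_eq_one
    (hres : ∀ m : Ideal A, m.IsMaximal → Module.finrank ℝ (A ⧸ m) = 1) :
    Function.Injective (exp : A → A) := by
  let _ : NormedAlgebra ℚ A := NormedAlgebra.restrictScalars ℚ ℝ A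
  intro x y hxy
  have hexp : exp (x - y) = 1 := by
    rw [sub_eq_add_neg, exp_add, hxy, ← exp_add, add_neg_cancel, exp_zero]
  exact sub_eq_zero.mp <|
    eq_zero_of_isNilpotent_of_exp_eq_one (isNilpotent_of_exp_eq_one hres hexp) hexp

end FiniteDimensional

end NormedSpace

theorem Function.Injective.existsUnique_rightInverse_range {α β : Type*} {f : α → β}
    (hf : Function.Injective f) : ∃! L : Set.range f → α, ∀ y : Set.range f, f (L y) = y :=
  ⟨Set.rangeSplitting f, Set.apply_rangeSplitting f, fun L hL =>
    funext fun y => hf <| by rw [hL, Set.apply_rangeSplitting f]⟩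

theorem stmt14_general (A : Type*) [NormedCommRing A] [NormedAlgebra ℝ A] [CompleteSpace A]
    [FiniteDimensional ℝ A]
    (hres : ∀ m : Ideal A, m.IsMaximal → Module.finrank ℝ (A ⧸ m) = 1) :
    Function.Injective (exp : A → A) ∧
      ∃! L : Set.range (exp : A → A) → A, ∀ y : Set.range (exp : A → A), exp (L y) = y :=
  have hinj := exp_injective_of_finrank_quotient_eq_one hres
  ⟨hinj, hinj.existsUnique_rightInverse_range⟩

/-- On a finite-dimensional commutative associative unital `ℝ`-algebra with a
complete algebra norm which admits a multiplicative basis and all of whose residue fields are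
`ℝ` (a multiplicative type-R algebra), the exponential function is injective; consequently
there is a unique logarithm defined on all of `Ld(A) = range exp`. -/
theorem stmt14 (A : Type*) [NormedCommRing A] [NormedAlgebra ℝ A] [CompleteSpace A]
    [FiniteDimensional ℝ A]
    (n : ℕ) (β : Module.Basis (Fin n) ℝ A)
    (hmul : ∀ i j, ∃ (c : ℝ) (k : Fin n), β i * β j = c • β k)
    (hres : ∀ m : Ideal A, m.IsMaximal → Module.finrank ℝ (A ⧸ m) = 1) :
    Function.Injective (exp : A → A) ∧
      ∃! L : Set.range (exp : A → A) → A, ∀ y : Set.range (exp : A → A), exp (L y) = y :=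
  stmt14_general A hres
end

section
/- Let A be a finite-dimensional commutative associative unital algebra over ℝ, equipped with a complete algebra norm, and suppose A has a maximal ideal m such that the quotient A/m is two-dimensional as an ℝ-vector space (i.e., some residue field of A is ℂ). Then there exists a nonzero element w ∈ A with exp(w) = 1; in particular the exponential function exp : A → A is not injective, and there are infinitely many elements (the integer multiples of w) in the kernel of exp in this sense. -/
/-!
Lift a square root of `-1` in the residue field `A ⧸ m ≅ ℂ` to some `t : A`. Newton's method
moves `t` by a nilpotent to a root `s` of a separable polynomial `P`; as `s` still reduces to a
root of the irreducible `X ^ 2 + 1` modulo `m`, we get `P = (X ^ 2 + 1) * q` with coprime factors,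
and the Bézout relation `a * (X ^ 2 + 1) + b * q = 1` evaluated at `s` gives an idempotent
`f = b(s) q(s) ∉ m` with `(s ^ 2 + 1) * f = 0`. Then `j = s * f` satisfies `j * j = -f`, so `1 - f`,
`f`, `j` span a copy of `ℝ × ℂ` in `A`, on which `exp (θ • j) = (1 - f) + cos θ • f + sin θ • j`;
hence `2π • j` is a nonzero period of `exp`.
-/

open NormedSpace Polynomial

theorem IsIntegral.exists_separable_aeval_eq_zero {K S : Type*} [Field K] [PerfectField K]
    [CommRing S] [Algebra K S] {t : S} (ht : IsIntegral K t) :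
    ∃ P : K[X], P.Separable ∧ ∃ s, IsNilpotent (t - s) ∧ aeval s P = 0 := by
  obtain ⟨P, k, hsqf, -, hdvd⟩ := exists_squarefree_dvd_pow_of_ne_zero (minpoly.ne_zero ht)
  have hsep : P.Separable := PerfectField.separable_iff_squarefree.mpr hsqf
  have hPk : aeval t (P ^ k) = 0 := minpoly.dvd_iff.mp hdvd
  have hnil : IsNilpotent (aeval t P) := ⟨k, by rwa [← map_pow]⟩
  have hunit : IsUnit (aeval t (derivative P)) := by
    obtain ⟨a, b, hab⟩ : IsCoprime (P ^ k) (derivative P) := hsep.pow_left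
    refine .of_mul_eq_one_right (aeval t b) ?_
    simpa [hPk] using congr_arg (aeval t) hab
  obtain ⟨s, ⟨hs, hPs⟩, -⟩ := existsUnique_nilpotent_sub_and_aeval_eq_zero hnil hunit
  exact ⟨P, hsep, s, hs, hPs⟩

theorem Ideal.exists_isIdempotentElem_notMem_aeval_mul_eq_zero {K S : Type*} [Field K]
    [PerfectField K] [CommRing S] [Algebra K S] (m : Ideal S) [m.IsPrime] {g : K[X]}
    (hg : Irreducible g) {t : S} (ht : IsIntegral K t) (hgt : aeval t g ∈ m) :
    ∃ s f : S, IsIdempotentElem f ∧ f ∉ m ∧ aeval s g * f = 0 := by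
  obtain ⟨P, hsep, s, hts, hPs⟩ := ht.exists_separable_aeval_eq_zero
  have hgs : aeval s g ∈ m := by
    have := nilradical_le_prime m (isNilpotent_aeval_sub_of_isNilpotent_sub g hts)
    simpa using m.sub_mem hgt this
  obtain ⟨q, rfl⟩ : g ∣ P := by
    refine (dvd_or_isCoprime g P hg).resolve_right fun ⟨a, b, hab⟩ ↦ ‹m.IsPrime›.ne_top ?_
    rw [m.eq_top_iff_one, ← map_one (aeval (R := K) s), ← hab, map_add, map_mul, map_mul, hPs,
      mul_zero, add_zero]
    exact m.mul_mem_left _ hgs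
  obtain ⟨a, b, hab⟩ := hsep.isCoprime
  have hf : aeval s (b * q) = 1 - aeval s a * aeval s g := by
    rw [eq_sub_iff_add_eq', ← map_mul, ← map_add, hab, map_one]
  have hgf : aeval s g * aeval s (b * q) = 0 := by
    rw [← map_mul, mul_left_comm, map_mul, hPs, mul_zero]
  refine ⟨s, aeval s (b * q), ?_, fun hmem ↦ ‹m.IsPrime›.ne_top ?_, hgf⟩
  · rw [IsIdempotentElem]
    nth_rw 1 [hf]
    linear_combination (-aeval s a) * hgf
  · rw [m.eq_top_iff_one]
    simpa [hf] using m.add_mem hmem (m.mul_mem_left (aeval s a) hgs)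

theorem Polynomial.irreducible_X_sq_add_one : Irreducible (X ^ 2 + 1 : ℝ[X]) := by
  apply irreducible_of_degree_le_three_of_not_isRoot
  · have := natDegree_X_pow_add_C (n := 2) (r := (1 : ℝ))
    simp_all
  · intro x
    simp only [IsRoot.def, eval_add, eval_pow, eval_X, eval_one]
    positivity

theorem Ideal.exists_isIdempotentElem_mul_self_eq_neg {S : Type*} [CommRing S] [Algebra ℝ S]
    (m : Ideal S) [m.IsPrime] {t : S} (ht : IsIntegral ℝ t) (htm : t ^ 2 + 1 ∈ m) :
    ∃ f j : S, IsIdempotentElem f ∧ f ≠ 0 ∧ f * j = j ∧ j * j = -f := by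
  obtain ⟨s, f, hf, hfm, hsf⟩ :=
    m.exists_isIdempotentElem_notMem_aeval_mul_eq_zero irreducible_X_sq_add_one ht (by simpa)
  simp only [map_add, map_pow, aeval_X, map_one] at hsf
  refine ⟨f, s * f, hf, fun h ↦ hfm (h ▸ m.zero_mem), ?_, ?_⟩
  · linear_combination s * hf.eq
  · linear_combination hsf + s ^ 2 * hf.eq

section Corner

variable {A : Type*} [CommRing A] [Algebra ℝ A] {f j : A}

noncomputable def prodComplexAlgHom (hf : IsIdempotentElem f) (hfj : f * j = j)
    (hj : j * j = -f) : ℝ × ℂ →ₐ[ℝ] A :=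
  AlgHom.ofLinearMap
    ((LinearMap.fst ℝ ℝ ℂ).smulRight (1 - f) +
      (Complex.reLm ∘ₗ LinearMap.snd ℝ ℝ ℂ).smulRight f +
      (Complex.imLm ∘ₗ LinearMap.snd ℝ ℝ ℂ).smulRight j)
    (by simp)
    (fun p q ↦ by
      simp only [LinearMap.add_apply, LinearMap.smulRight_apply, LinearMap.coe_comp,
        Function.comp_apply, LinearMap.fst_apply, LinearMap.snd_apply, Complex.reLm_coe,
        Complex.imLm_coe, Prod.fst_mul, Prod.snd_mul, Complex.mul_re, Complex.mul_im,
        Algebra.smul_def, map_mul, map_sub, map_add]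
      set α := algebraMap ℝ A
      linear_combination (α p.2.re - α p.1) * (α q.1 - α q.2.re) * hf.eq
        + (α p.1 * α q.2.im + α p.2.im * α q.1 - α p.2.re * α q.2.im - α p.2.im * α q.2.re) * hfj
        - α p.2.im * α q.2.im * hj)

theorem prodComplexAlgHom_apply (hf : IsIdempotentElem f) (hfj : f * j = j) (hj : j * j = -f)
    (p : ℝ × ℂ) : prodComplexAlgHom hf hfj hj p = p.1 • (1 - f) + p.2.re • f + p.2.im • j :=
  rfl

end Corner

theorem exp_smul_eq_of_mul_self_eq_neg {A : Type*} [NormedCommRing A] [NormedAlgebra ℝ A]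
    {f j : A} (hf : IsIdempotentElem f) (hfj : f * j = j) (hj : j * j = -f) (θ : ℝ) :
    exp (θ • j) = (1 - f) + Real.cos θ • f + Real.sin θ • j := by
  let ψ := prodComplexAlgHom hf hfj hj
  have hψ : Continuous ψ := ψ.toLinearMap.continuous_of_finiteDimensional
  have hθ : θ • j = ψ (0, θ * Complex.I) := by simp [ψ, prodComplexAlgHom_apply]
  have hexp : exp ((0 : ℝ), θ * Complex.I) = (1, Complex.exp (θ * Complex.I)) :=
    Prod.ext (by simp [Prod.fst_exp]) (by simp [Prod.snd_exp, Complex.exp_eq_exp_ℂ])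
  rw [hθ, ← map_exp_of_mem_ball (𝕂 := ℝ) ψ hψ _ (by simp [expSeries_radius_eq_top]), hexp]
  simp [ψ, prodComplexAlgHom_apply, Complex.exp_ofReal_mul_I_re, Complex.exp_ofReal_mul_I_im]

theorem exists_sq_eq_neg_one_of_finrank_eq_two {F : Type*} [Field F] [Algebra ℝ F]
    (h : Module.finrank ℝ F = 2) : ∃ u : F, u ^ 2 = -1 := by
  have : FiniteDimensional ℝ F := Module.finite_of_finrank_eq_succ h
  let φ : F →ₐ[ℝ] ℂ := IsAlgClosed.lift
  have hφ : Function.Injective φ := φ.toRingHom.injective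
  obtain ⟨u, hu⟩ := (LinearMap.injective_iff_surjective_of_finrank_eq_finrank
    (f := φ.toLinearMap) (h.trans Complex.finrank_real_complex.symm)).mp hφ Complex.I
  refine ⟨u, hφ ?_⟩
  simp [show φ u = Complex.I from hu]

theorem stmt15_general (A : Type*) [NormedCommRing A] [NormedAlgebra ℝ A]
    [FiniteDimensional ℝ A]
    (m : Ideal A) (hm : m.IsMaximal) (hdim : Module.finrank ℝ (A ⧸ m) = 2) :
    ∃ w : A, w ≠ 0 ∧ exp w = 1 ∧ (∀ k : ℤ, exp (k • w) = 1) ∧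
      {z : A | exp z = 1}.Infinite ∧ ¬ Function.Injective (exp : A → A) := by
  let := Ideal.Quotient.field m
  obtain ⟨u, hu⟩ := exists_sq_eq_neg_one_of_finrank_eq_two hdim
  obtain ⟨t, rfl⟩ := Ideal.Quotient.mk_surjective u
  have htm : t ^ 2 + 1 ∈ m := by
    rw [← Ideal.Quotient.eq_zero_iff_mem, map_add, map_pow, hu, map_one, neg_add_cancel]
  obtain ⟨f, j, hf, hf0, hfj, hj⟩ :=
    m.exists_isIdempotentElem_mul_self_eq_neg (Algebra.IsIntegral.isIntegral t) htm
  set w := (2 * Real.pi) • j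
  have hw : w ≠ 0 := smul_ne_zero (by positivity) fun h ↦ hf0 (by simpa [h] using hj.symm)
  have hkw (k : ℤ) : exp (k • w) = 1 := by
    rw [← Int.cast_smul_eq_zsmul ℝ, smul_smul, exp_smul_eq_of_mul_self_eq_neg hf hfj hj,
      Real.cos_int_mul_two_pi, Real.sin_eq_zero_iff.mpr ⟨2 * k, by push_cast; ring⟩]
    simp
  have hw1 : exp w = 1 := by simpa using hkw 1
  refine ⟨w, hw, hw1, hkw, Set.infinite_of_injective_forall_mem ?_ hkw, fun h ↦ hw (h ?_)⟩
  · intro k l hkl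
    simp only [← Int.cast_smul_eq_zsmul ℝ] at hkl
    exact_mod_cast smul_left_injective ℝ hw hkl
  · rw [hw1, exp_zero]

/-- If a finite-dimensional commutative associative unital `ℝ`-algebra with a
complete algebra norm has a maximal ideal whose residue field is two-dimensional over `ℝ`
(i.e. is `ℂ`), then there is a nonzero `w` with `exp w = 1`, all integer multiples of `w`
also satisfy this (so the "kernel" of `exp` is infinite), and `exp` is not injective. -/
theorem stmt15 (A : Type*) [NormedCommRing A] [NormedAlgebra ℝ A] [CompleteSpace A]
    [FiniteDimensional ℝ A]
    (m : Ideal A) (hm : m.IsMaximal) (hdim : Module.finrank ℝ (A ⧸ m) = 2) :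
    ∃ w : A, w ≠ 0 ∧ exp w = 1 ∧ (∀ k : ℤ, exp (k • w) = 1) ∧
      {z : A | exp z = 1}.Infinite ∧ ¬ Function.Injective (exp : A → A) :=
  stmt15_general A m hm hdim
end
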